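/- arXiv:2403.11320 — 3 statements merged into one kernel-verified Lean document; each statement's English description precedes it below -/
import Mathlib

section
/- Let $w_1, \dots, w_k$ be positive integers with $\gcd(w_1, \dots, w_k) = d$, and set $m = \min_j w_j$ and $M = \max_j w_j$. If $C \geq (m-1)(M-1)$ and $d \mid C$, then there exist nonnegative integers $x_1, \dots, x_k$ with $\sum_{j=1}^k x_j w_j = C$. -/
open Finset

lemma bezout_finset {ι : Type*} [DecidableEq ι] (w : ι → ℕ) (s : Finset ι) :
    ∃ z : ι → ℤ, ∑ j ∈ s, z j * w j = ((s.gcd w : ℕ) : ℤ) := by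
  classical
  induction s using Finset.induction_on with
  | empty => exact ⟨0, by simp⟩
  | @insert a s ha ih =>
    obtain ⟨z, hz⟩ := ih
    refine ⟨fun j => if j = a then Nat.gcdA (w a) (s.gcd w)
      else Nat.gcdB (w a) (s.gcd w) * z j, ?_⟩
    rw [Finset.sum_insert ha]
    have hrest : ∀ j ∈ s, (fun j => if j = a then Nat.gcdA (w a) (s.gcd w)
        else Nat.gcdB (w a) (s.gcd w) * z j) j * (w j : ℤ)
        = Nat.gcdB (w a) (s.gcd w) * z j * (w j : ℤ) := by
      intro j hj
      simp only [if_neg (show j ≠ a by rintro rfl; exact ha hj)]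
    rw [Finset.sum_congr rfl hrest]
    have h1 : ∑ j ∈ s, Nat.gcdB (w a) (s.gcd w) * z j * (w j : ℤ)
        = Nat.gcdB (w a) (s.gcd w) * ((s.gcd w : ℕ) : ℤ) := by
      rw [← hz, Finset.mul_sum]; simp [mul_assoc]
    rw [h1]
    simp only [if_pos rfl]
    have h2 := Nat.gcd_eq_gcd_ab (w a) (s.gcd w)
    have h3 : (((insert a s).gcd w : ℕ) : ℤ) = ((Nat.gcd (w a) (s.gcd w) : ℕ) : ℤ) := by
      rw [Finset.gcd_insert]; rfl
    simp only [if_true]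
    rw [h3, h2]; ring

lemma count_sum (k : ℕ) (w : Fin k → ℕ) (L : List (Fin k)) :
    ∑ j, L.count j * w j = (L.map w).sum := by
  induction L with
  | nil => simp
  | cons a L ih =>
    simp only [List.map_cons, List.sum_cons, List.count_cons]
    rw [← ih]
    have h : ∀ j : Fin k, (L.count j + if (a == j) = true then 1 else 0) * w j
        = L.count j * w j + (if j = a then w j else 0) := by
      intro j
      rcases eq_or_ne j a with rfl | hne
      · simp [add_mul]
      · have hb : (a == j) = false := by simp [Ne.symm hne]
        simp [hb, hne]
    rw [Finset.sum_congr rfl (fun j _ => h j), Finset.sum_add_distrib]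
    simp [Finset.sum_ite_eq', add_comm]

lemma shrink (k m : ℕ) (hm : 0 < m) (w : Fin k → ℕ) (L : List (Fin k)) :
    ∃ L' : List (Fin k),
      L'.length ≤ m - 1 ∧ (L'.map w).sum ≡ (L.map w).sum [MOD m] := by
  suffices H : ∀ n (L : List (Fin k)), L.length = n →
      ∃ L' : List (Fin k),
        L'.length ≤ m - 1 ∧ (L'.map w).sum ≡ (L.map w).sum [MOD m] from H _ L rfl
  intro n
  induction n using Nat.strong_induction_on with
  | _ n ih =>
  intro L hL
  subst hL
  by_cases h : L.length < m
  · exact ⟨L, by omega, Nat.ModEq.refl _⟩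
  · push_neg at h
    haveI : NeZero m := ⟨hm.ne'⟩
    have hcard : Fintype.card (ZMod m) < Fintype.card (Fin (L.length + 1)) := by
      simp [ZMod.card]; omega
    obtain ⟨i, j, hij, heq⟩ := Fintype.exists_ne_map_eq_of_card_lt
      (fun i : Fin (L.length + 1) => ((((L.map w).take i).sum : ℕ) : ZMod m)) hcard
    wlog hlt : (i : ℕ) < (j : ℕ) generalizing i j
    · exact this j i hij.symm heq.symm (by
        rcases Nat.lt_or_ge (j : ℕ) (i : ℕ) with h' | h'
        · exact h'
        · exact absurd (Fin.ext (by omega)) hij)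
    have hmod : ((L.map w).take i).sum ≡ ((L.map w).take j).sum [MOD m] :=
      (ZMod.natCast_eq_natCast_iff _ _ _).mp heq
    set L2 : List (Fin k) := L.take i ++ L.drop j with hL2
    have hlen2 : L2.length < L.length := by
      simp only [hL2, List.length_append, List.length_take, List.length_drop]
      have hjle : (j : ℕ) ≤ L.length := by omega
      omega
    obtain ⟨L', h1, h2⟩ := ih L2.length hlen2 L2 rfl
    refine ⟨L', h1, h2.trans ?_⟩
    have hsum2 : (L2.map w).sum = ((L.map w).take i).sum + ((L.map w).drop j).sum := by
      simp [hL2, List.map_take, List.map_drop]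
    have hsumL : (L.map w).sum = ((L.map w).take j).sum + ((L.map w).drop j).sum := by
      rw [List.sum_take_add_sum_drop]
    rw [hsum2, hsumL]
    exact hmod.add_right _
theorem stmt_4 (k : ℕ) (hk : 0 < k) (w : Fin k → ℕ) (hw : ∀ j, 0 < w j)
    (d : ℕ) (hd : d = Finset.univ.gcd w)
    (C : ℕ) (hC : 0 < C) (hdvd : d ∣ C)
    (hbig : (Finset.univ.inf' (Finset.univ_nonempty_iff.mpr ⟨⟨0, hk⟩⟩) w - 1) *
        (Finset.univ.sup' (Finset.univ_nonempty_iff.mpr ⟨⟨0, hk⟩⟩) w - 1) ≤ C) :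
    ∃ x : Fin k → ℕ, ∑ j, x j * w j = C := by
  classical
  set ne : (Finset.univ : Finset (Fin k)).Nonempty :=
    Finset.univ_nonempty_iff.mpr ⟨⟨0, hk⟩⟩ with hne
  set m : ℕ := Finset.univ.inf' ne w with hmdef
  set M : ℕ := Finset.univ.sup' ne w with hMdef
  obtain ⟨j0, -, hj0⟩ := Finset.exists_mem_eq_inf' ne w
  have hj0' : m = w j0 := hmdef.trans hj0
  have hm : 0 < m := hj0' ▸ hw j0
  haveI : NeZero m := ⟨hm.ne'⟩
  -- Step 1: integer combination equal to C
  obtain ⟨z, hz⟩ := bezout_finset w (Finset.univ : Finset (Fin k))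
  obtain ⟨t, ht⟩ := hdvd
  have hzC : ∑ j, (t : ℤ) * z j * (w j : ℤ) = (C : ℤ) := by
    have : ∑ j, (t : ℤ) * z j * (w j : ℤ) = (t : ℤ) * ∑ j, z j * (w j : ℤ) := by
      rw [Finset.mul_sum]; simp [mul_assoc]
    rw [this, hz, ← hd]
    push_cast [ht]; ring
  -- Step 2: nonnegative coefficients mod m
  set c : Fin k → ℕ := fun j => ((t : ℤ) * z j % (m : ℤ)).toNat with hc
  have hcongr : (∑ j, c j * w j) ≡ C [MOD m] := by
    rw [← ZMod.natCast_eq_natCast_iff]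
    push_cast
    have : ∀ j : Fin k, ((c j : ℕ) : ZMod m) = (((t : ℤ) * z j : ℤ) : ZMod m) := by
      intro j
      have hnn : 0 ≤ (t : ℤ) * z j % (m : ℤ) :=
        Int.emod_nonneg _ (by exact_mod_cast hm.ne')
      have h1 : ((c j : ℕ) : ℤ) = (t : ℤ) * z j % (m : ℤ) := Int.toNat_of_nonneg hnn
      have h2 : ((c j : ℕ) : ZMod m) = (((t : ℤ) * z j % (m : ℤ) : ℤ) : ZMod m) := by
        rw [← h1]; push_cast; rfl
      rw [h2, Int.emod_def]
      push_cast
      simp [ZMod.natCast_self]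
    calc (∑ j, (c j : ZMod m) * (w j : ZMod m))
        = ∑ j, (((t : ℤ) * z j : ℤ) : ZMod m) * (w j : ZMod m) := by
          exact Finset.sum_congr rfl fun j _ => by rw [this j]
      _ = (((∑ j, (t : ℤ) * z j * (w j : ℤ)) : ℤ) : ZMod m) := by push_cast; ring
      _ = (C : ZMod m) := by rw [hzC]; push_cast; rfl
  -- Step 3: list realizing ∑ c j * w j
  set L0 : List (Fin k) := (List.finRange k).flatMap fun j => List.replicate (c j) j with hL0
  have hL0sum : (L0.map w).sum = ∑ j, c j * w j := by
    rw [hL0, List.map_flatMap, List.flatMap, List.sum_flatten, List.map_map]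
    rw [Fin.sum_univ_def]
    congr 1
    apply List.map_congr_left
    intro j _
    simp [List.map_replicate, List.sum_replicate, smul_eq_mul, Function.comp]
  -- Step 4: shrink
  obtain ⟨L', hlen, hmod⟩ := shrink k m hm w L0
  set T : ℕ := (L'.map w).sum with hT
  have hTC : T ≡ C [MOD m] := by
    rw [hT]
    exact (hL0sum ▸ hmod).trans hcongr
  have hTle : T ≤ (m - 1) * M := by
    calc T ≤ (L'.map w).length * M := by
          apply List.sum_le_card_nsmul
          intro x hx
          obtain ⟨j, -, rfl⟩ := List.mem_map.mp hx
          exact Finset.le_sup' w (Finset.mem_univ j)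
      _ ≤ (m - 1) * M := by
          rw [List.length_map]
          exact Nat.mul_le_mul_right M hlen
  have hMm : m ≤ M := hj0'.trans_le (Finset.le_sup' w (Finset.mem_univ j0))
  have hTleC : T ≤ C := by
    by_contra hlt
    push_neg at hlt
    have hdvd' : m ∣ T - C := (Nat.modEq_iff_dvd' hlt.le).mp hTC.symm
    have hm' : m ≤ T - C := Nat.le_of_dvd (by omega) hdvd'
    have hMul : (m - 1) * M = (m - 1) * (M - 1) + (m - 1) := by
      rw [← Nat.mul_succ]
      congr 1
      omega
    omega
  have hdvdCT : m ∣ C - T := (Nat.modEq_iff_dvd' hTleC).mp hTC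
  refine ⟨fun j => L'.count j + if j = j0 then (C - T) / m else 0, ?_⟩
  have hsplit : ∀ j : Fin k, (L'.count j + if j = j0 then (C - T) / m else 0) * w j
      = L'.count j * w j + (if j = j0 then (C - T) / m * w j else 0) := by
    intro j; split <;> ring
  rw [Finset.sum_congr rfl fun j _ => hsplit j, Finset.sum_add_distrib]
  rw [count_sum k w L', ← hT]
  rw [Finset.sum_ite_eq' Finset.univ j0 (fun j => (C - T) / m * w j)]
  simp only [Finset.mem_univ, if_true]
  rw [← hj0', Nat.div_mul_cancel hdvdCT]
  omega
end

section
/- Let $x$ be a feasible solution to the unbounded knapsack problem with capacity $C$, let type $1$ have the maximum profit density, $p_1/w_1 \geq p_j/w_j$ for all $j$, suppose $p_2/w_2 \geq p_j/w_j$ for all $j \geq 2$, and let $r = C - \lfloor C/w_1 \rfloor w_1$. Then every feasible integer solution $x$ satisfies $\sum_j p_j x_j \leq \lfloor C/w_1 \rfloor p_1 + \lfloor r p_2/w_2 \rfloor$. -/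
theorem stmt_7 (n : ℕ) (hn : 2 ≤ n) (p w : ℕ → ℕ)
    (hp : ∀ j < n, 0 < p j) (hw : ∀ j < n, 0 < w j)
    (hord1 : ∀ j < n, (p j : ℚ) / w j ≤ (p 0 : ℚ) / w 0)
    (hord2 : ∀ j < n, 1 ≤ j → (p j : ℚ) / w j ≤ (p 1 : ℚ) / w 1)
    (C : ℕ) (r : ℕ) (hr : r = C % w 0)
    (x : ℕ → ℕ) (hfeas : ∑ j ∈ Finset.range n, w j * x j ≤ C) :
    ∑ j ∈ Finset.range n, p j * x j ≤ (C / w 0) * p 0 + r * p 1 / w 1 := by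
  have h0n : 0 < n := by omega
  have h1n : 1 < n := hn
  have hw0 : 0 < w 0 := hw 0 h0n
  have hw1 : 0 < w 1 := hw 1 h1n
  have hw0Q : (0:ℚ) < w 0 := by exact_mod_cast hw0
  have hw1Q : (0:ℚ) < w 1 := by exact_mod_cast hw1
  set k := C / w 0 with hk
  set T := Finset.range n \ {0} with hT
  have h0mem : 0 ∈ Finset.range n := Finset.mem_range.2 h0n
  -- split of the weight sum
  have hwsplit : ∑ j ∈ Finset.range n, w j * x j
      = (∑ j ∈ T, w j * x j) + w 0 * x 0 :=
    (Finset.sum_eq_sum_sdiff_singleton_add h0mem _)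
  have hpsplit : ∑ j ∈ Finset.range n, p j * x j
      = (∑ j ∈ T, p j * x j) + p 0 * x 0 :=
    (Finset.sum_eq_sum_sdiff_singleton_add h0mem _)
  have hS : (∑ j ∈ T, w j * x j) + w 0 * x 0 ≤ C := by rw [← hwsplit]; exact hfeas
  have hx0 : x 0 ≤ k := by
    have h0 : x 0 * w 0 ≤ C := by rw [mul_comm]; omega
    exact (Nat.le_div_iff_mul_le hw0).2 h0
  have hCeq : C = w 0 * k + r := by
    rw [hr, hk]; exact (Nat.div_add_mod C (w 0)).symm
  have hord1' : (p 1 : ℚ) * w 0 ≤ (p 0 : ℚ) * w 1 := by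
    have h := hord1 1 h1n
    rw [div_le_div_iff₀ hw1Q hw0Q] at h
    linarith
  -- key per-term bound on T
  have hterm : ∀ j ∈ T, (p j : ℚ) * x j * w 1 ≤ (p 1 : ℚ) * ((w j : ℚ) * x j) := by
    intro j hj
    rw [hT, Finset.mem_sdiff, Finset.mem_range, Finset.mem_singleton] at hj
    have hjn : j < n := hj.1
    have hj1 : 1 ≤ j := by omega
    have h := hord2 j hjn hj1
    have hwjQ : (0:ℚ) < w j := by exact_mod_cast hw j hjn
    rw [div_le_div_iff₀ hwjQ hw1Q] at h
    have hx : (0:ℚ) ≤ x j := by positivity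
    nlinarith [h, hx]
  have hsumT : (∑ j ∈ T, (p j : ℚ) * x j) * w 1
      ≤ (p 1 : ℚ) * ∑ j ∈ T, (w j : ℚ) * x j := by
    rw [Finset.sum_mul, Finset.mul_sum]
    exact Finset.sum_le_sum hterm
  -- the multiplied nat inequality
  have key : (∑ j ∈ Finset.range n, p j * x j) * w 1 ≤ k * p 0 * w 1 + r * p 1 := by
    have hQ : ((∑ j ∈ Finset.range n, p j * x j : ℕ) : ℚ) * (w 1 : ℚ)
        ≤ ((k * p 0 * w 1 + r * p 1 : ℕ) : ℚ) := by
      push_cast [hpsplit]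
      have hSQ : (∑ j ∈ T, (w j : ℚ) * x j) + (w 0 : ℚ) * x 0 ≤ (C : ℚ) := by
        exact_mod_cast hS
      have hCQ : (C : ℚ) = (w 0 : ℚ) * k + r := by exact_mod_cast hCeq
      have hx0Q : (x 0 : ℚ) ≤ (k : ℚ) := by exact_mod_cast hx0
      have hp1Q : (0:ℚ) ≤ p 1 := by positivity
      nlinarith [hsumT, hSQ, hCQ, hx0Q, hord1', hp1Q,
        mul_nonneg (sub_nonneg.2 hord1') (sub_nonneg.2 hx0Q),
        mul_nonneg hp1Q (sub_nonneg.2 hx0Q)]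
    exact_mod_cast hQ
  calc ∑ j ∈ Finset.range n, p j * x j
      ≤ (k * p 0 * w 1 + r * p 1) / w 1 := (Nat.le_div_iff_mul_le hw1).2 key
    _ = k * p 0 + r * p 1 / w 1 := by
        rw [add_comm, Nat.add_mul_div_right _ _ hw1, add_comm]
end

section
/- Suppose in the unbounded knapsack problem each type $j$ of a subset $S$ satisfies $p_b w_j - p_j w_b \geq 1$, with $p_b, w_b \leq R$ (type $b$ has maximum profit density). If a feasible solution $x$ selects more than $(R^2 - 1)$ total items from $S$, i.e. $\sum_{j \in S} x_j \geq R^2$, and the greedy solution using only type $b$ with residual $r = C \bmod w_b$ is feasible, then $x$ is not optimal: $\sum_j p_j x_j < \lfloor C/w_b \rfloor p_b$. -/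
theorem stmt_19 (R : ℕ) (hR : 0 < R) (n : ℕ) (p w : Fin n → ℕ)
    (hp : ∀ j, 1 ≤ p j ∧ p j ≤ R) (hw : ∀ j, 1 ≤ w j ∧ w j ≤ R)
    (b : Fin n) (hbmax : ∀ j, p j * w b ≤ p b * w j)
    (S : Finset (Fin n)) (hS : ∀ j ∈ S, p j * w b + 1 ≤ p b * w j)
    (C : ℕ) (hC : w b * R ^ 2 ≤ C)
    (x : Fin n → ℕ) (hfeas : ∑ j, w j * x j ≤ C)
    (hmany : R ^ 2 ≤ ∑ j ∈ S, x j) :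
    ∑ j, p j * x j < (C / w b) * p b := by
  have hwb : 0 < w b := (hw b).1
  have key : ∀ j, p j * x j * w b + (if j ∈ S then x j else 0) ≤ p b * (w j * x j) := by
    intro j
    by_cases h : j ∈ S
    · simp only [if_pos h]
      calc p j * x j * w b + x j = (p j * w b + 1) * x j := by ring
        _ ≤ (p b * w j) * x j := Nat.mul_le_mul_right _ (hS j h)
        _ = p b * (w j * x j) := by ring
    · simp only [if_neg h, add_zero]
      calc p j * x j * w b = (p j * w b) * x j := by ring
        _ ≤ (p b * w j) * x j := Nat.mul_le_mul_right _ (hbmax j)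
        _ = p b * (w j * x j) := by ring
  have hsum : (∑ j, p j * x j) * w b + ∑ j ∈ S, x j ≤ p b * C := by
    calc (∑ j, p j * x j) * w b + ∑ j ∈ S, x j
        = ∑ j, (p j * x j * w b + if j ∈ S then x j else 0) := by
          rw [Finset.sum_add_distrib, Finset.sum_mul]
          congr 1
          rw [Finset.sum_ite_mem]
          simp
      _ ≤ ∑ j, p b * (w j * x j) := Finset.sum_le_sum (fun j _ => key j)
      _ = p b * ∑ j, w j * x j := by rw [Finset.mul_sum]
      _ ≤ p b * C := Nat.mul_le_mul_left _ hfeas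
  have hmod : p b * (C % w b) + R ≤ R ^ 2 := by
    have h1 : C % w b < w b := Nat.mod_lt C hwb
    have h2 : p b ≤ R := (hp b).2
    have h3 : w b ≤ R := (hw b).2
    calc p b * (C % w b) + R ≤ R * (C % w b) + R := by
          exact Nat.add_le_add_right (Nat.mul_le_mul_right _ h2) R
      _ = R * (C % w b + 1) := by ring
      _ ≤ R * w b := Nat.mul_le_mul_left _ h1
      _ ≤ R * R := Nat.mul_le_mul_left _ h3
      _ = R ^ 2 := by ring
  have hdm : w b * (C / w b) + C % w b = C := Nat.div_add_mod C (w b)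
  have h2 : p b * (w b * (C / w b)) + p b * (C % w b) = p b * C := by
    rw [← Nat.mul_add, hdm]
  have hfin : (∑ j, p j * x j) * w b < (C / w b) * p b * w b := by
    have h3 : p b * (w b * (C / w b)) = (C / w b) * p b * w b := by ring
    nlinarith [hsum, hmany, hmod, hR]
  exact Nat.lt_of_mul_lt_mul_right hfin
end
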